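/- arXiv:1611.04444 — 7 statements merged into one kernel-verified Lean document; each statement's English description precedes it below -/
import Mathlib

section
/- In any possibilistic Gödel model, the Fischer Servi axiom FS2 is valid: (Π(f) ⇒ N(g)) ⇒ N(f ⇒ g) = 1 for all f, g : W → [0,1], where Π(f) = sup_w min(π(w), f(w)), N(h) = inf_w (π(w) ⇒ h(w)), ⇒ is Gödel implication, and (f ⇒ g)(w) = f(w) ⇒ g(w). -/
open Set

noncomputable def gimp (x y : ℝ) : ℝ := if x ≤ y then 1 else y

lemma gimp_le_one {x y : ℝ} (hy : y ≤ 1) : gimp x y ≤ 1 := by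
  unfold gimp; split <;> simp [hy]

lemma one_le_gimp {x y : ℝ} (h : x ≤ y) : 1 ≤ gimp x y := by
  unfold gimp; rw [if_pos h]

theorem stmt8 {W : Type*} [Nonempty W] (π : W → ℝ) (hπ : ∀ w, π w ∈ Icc (0:ℝ) 1)
    (f g : W → ℝ) (hf : ∀ w, f w ∈ Icc (0:ℝ) 1) (hg : ∀ w, g w ∈ Icc (0:ℝ) 1) :
    gimp (gimp (⨆ w, min (π w) (f w)) (⨅ w, gimp (π w) (g w)))
      (⨅ w, gimp (π w) (gimp (f w) (g w))) = 1 := by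
  set S := ⨆ w, min (π w) (f w) with hS
  set Ng := ⨅ w, gimp (π w) (g w) with hNg
  have hbddS : BddAbove (range fun w => min (π w) (f w)) :=
    ⟨1, by rintro x ⟨w, rfl⟩; exact le_trans (min_le_left _ _) (hπ w).2⟩
  have hbddN : BddBelow (range fun w => gimp (π w) (g w)) :=
    ⟨0, by rintro x ⟨w, rfl⟩; simp only [gimp]; split; exacts [zero_le_one, (hg w).1]⟩
  have hNg_le_one : Ng ≤ 1 := by
    obtain ⟨w⟩ := ‹Nonempty W›
    exact le_trans (ciInf_le hbddN w) (gimp_le_one (hg w).2)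
  have key : ∀ w, gimp S Ng ≤ gimp (π w) (gimp (f w) (g w)) := by
    intro w
    by_cases hfg : f w ≤ g w
    · have h1 : gimp (f w) (g w) = 1 := if_pos hfg
      rw [h1]
      have : gimp (π w) 1 = 1 := if_pos (hπ w).2
      rw [this]
      exact gimp_le_one hNg_le_one
    · push_neg at hfg
      have h1 : gimp (f w) (g w) = g w := if_neg (not_le.mpr hfg)
      rw [h1]
      by_cases hSN : S ≤ Ng
      · -- show π w ≤ g w
        have hmin : min (π w) (f w) ≤ gimp (π w) (g w) :=
          le_trans (le_ciSup hbddS w) (le_trans hSN (ciInf_le hbddN w))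
        have hpg : π w ≤ g w := by
          by_contra hpg
          push_neg at hpg
          rw [gimp, if_neg (not_le.mpr hpg)] at hmin
          have : g w < min (π w) (f w) := lt_min hpg hfg
          linarith
        calc gimp S Ng ≤ 1 := gimp_le_one hNg_le_one
          _ ≤ gimp (π w) (g w) := one_le_gimp hpg
      · have : gimp S Ng = Ng := if_neg hSN
        rw [this]
        exact ciInf_le hbddN w
  have hB : gimp S Ng ≤ ⨅ w, gimp (π w) (gimp (f w) (g w)) := le_ciInf key
  exact if_pos hB
end

section
/- In any possibilistic Gödel model, axiom P is valid: N(f ⇒ g) ⇒ (Π(f) ⇒ Π(g)) = 1 for all f, g : W → [0,1], where N(h) = inf_w (π(w) ⇒ h(w)), Π(h) = sup_w min(π(w), h(w)), and ⇒ is Gödel implication (pointwise on functions). -/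
open Set

lemma gimp_eq_one_of_le {x y : ℝ} (h : x ≤ y) : gimp x y = 1 := if_pos h

lemma gimp_nonneg {x y : ℝ} (hy : 0 ≤ y) : 0 ≤ gimp x y := by
  unfold gimp; split <;> simp [hy]

theorem stmt9 {W : Type*} [Nonempty W] (π : W → ℝ) (hπ : ∀ w, π w ∈ Icc (0:ℝ) 1)
    (f g : W → ℝ) (hf : ∀ w, f w ∈ Icc (0:ℝ) 1) (hg : ∀ w, g w ∈ Icc (0:ℝ) 1) :
    gimp (⨅ w, gimp (π w) (gimp (f w) (g w)))
      (gimp (⨆ w, min (π w) (f w)) (⨆ w, min (π w) (g w))) = 1 := by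
  have hbdd : BddBelow (range fun w => gimp (π w) (gimp (f w) (g w))) :=
    ⟨0, by rintro _ ⟨w, rfl⟩; exact gimp_nonneg (gimp_nonneg (hg w).1)⟩
  have hbg : BddAbove (range fun w => min (π w) (g w)) :=
    ⟨1, by rintro _ ⟨w, rfl⟩; exact le_trans (min_le_left _ _) (hπ w).2⟩
  have key : (⨅ w, gimp (π w) (gimp (f w) (g w))) ≤
      gimp (⨆ w, min (π w) (f w)) (⨆ w, min (π w) (g w)) := by
    unfold gimp
    split
    · refine le_trans (ciInf_le hbdd (Classical.arbitrary W)) ?_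
      unfold gimp; split <;> split <;>
        first
        | simp
        | exact le_trans (hg _).2 (by norm_num)
        | exact (hg _).2
    · rename_i h
      push_neg at h
      obtain ⟨w, hw⟩ := exists_lt_of_lt_ciSup h
      have hmin : min (π w) (g w) < min (π w) (f w) := lt_of_le_of_lt (le_ciSup hbg w) hw
      have h2 : g w < π w := by
        by_contra hc
        push_neg at hc
        rw [min_eq_left hc] at hmin
        exact absurd (min_le_left (π w) (f w)) (not_le.mpr hmin)
      have h1 : g w < f w := by
        rw [min_eq_right h2.le] at hmin
        exact hmin.trans_le (min_le_right _ _)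
      have : gimp (π w) (gimp (f w) (g w)) = g w := by
        unfold gimp
        rw [if_neg (not_le.mpr h1), if_neg (not_le.mpr h2)]
      calc (⨅ w, gimp (π w) (gimp (f w) (g w))) ≤ gimp (π w) (gimp (f w) (g w)) :=
            ciInf_le hbdd w
        _ = g w := this
        _ = min (π w) (g w) := (min_eq_right h2.le).symm
        _ ≤ _ := le_ciSup hbg w
  rw [gimp, if_pos key]
end

section
/- In any possibilistic Gödel model with normalized π, theorem T1 holds semantically: Π(f) ⇒ 0 = N(λw. f(w) ⇒ 0), i.e., the Gödel negation of the possibility of f equals the necessity of the pointwise Gödel negation of f. (Here ¬x abbreviates x ⇒ 0.) -/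
open Set

theorem stmt10 {W : Type*} [Nonempty W] (π : W → ℝ) (hπ : ∀ w, π w ∈ Icc (0:ℝ) 1)
    (hnorm : (⨆ w, π w) = 1) (f : W → ℝ) (hf : ∀ w, f w ∈ Icc (0:ℝ) 1) :
    gimp (⨆ w, min (π w) (f w)) 0 = ⨅ w, gimp (π w) (gimp (f w) 0) := by
  have hbdd : BddAbove (Set.range fun w => min (π w) (f w)) := by
    refine ⟨1, ?_⟩
    rintro x ⟨w, rfl⟩
    exact le_trans (min_le_left _ _) (hπ w).2
  have hterm : ∀ w, gimp (π w) (gimp (f w) 0) = 0 ∨ gimp (π w) (gimp (f w) 0) = 1 := by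
    intro w
    unfold gimp
    by_cases h1 : f w ≤ 0 <;> by_cases h2 : π w ≤ 0 <;> simp [h1, h2, (hπ w).1, (hπ w).2]
  have hbb : BddBelow (Set.range fun w => gimp (π w) (gimp (f w) 0)) := by
    refine ⟨0, ?_⟩
    rintro x ⟨w, rfl⟩
    show (0:ℝ) ≤ gimp (π w) (gimp (f w) 0)
    rcases hterm w with h | h <;> rw [h] <;> norm_num
  by_cases hs : (⨆ w, min (π w) (f w)) ≤ 0
  · rw [gimp, if_pos hs]
    have : ∀ w, gimp (π w) (gimp (f w) 0) = 1 := by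
      intro w
      have hw : min (π w) (f w) ≤ 0 := le_trans (le_ciSup hbdd w) hs
      rcases min_le_iff.mp (le_refl (min (π w) (f w))) with _ | _
      · rcases le_or_gt (π w) 0 with h | h
        · unfold gimp
          by_cases h1 : f w ≤ 0 <;> simp [h1, le_trans h (by norm_num : (0:ℝ) ≤ 1), h]
        · have hf0 : f w ≤ 0 := by
            rcases le_or_gt (f w) 0 with h' | h'
            · exact h'
            · exact absurd hw (by simp [lt_min_iff]; exact ⟨h, h'⟩)
          unfold gimp
          simp [hf0, (hπ w).2]
      · rcases le_or_gt (π w) 0 with h | h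
        · unfold gimp
          by_cases h1 : f w ≤ 0 <;> simp [h1, le_trans h (by norm_num : (0:ℝ) ≤ 1), h]
        · have hf0 : f w ≤ 0 := by
            rcases le_or_gt (f w) 0 with h' | h'
            · exact h'
            · exact absurd hw (by simp [lt_min_iff]; exact ⟨h, h'⟩)
          unfold gimp
          simp [hf0, (hπ w).2]
    simp [this]
  · rw [gimp, if_neg hs]
    push_neg at hs
    obtain ⟨w, hw⟩ := exists_lt_of_lt_ciSup hs
    have hπw : 0 < π w := lt_of_lt_of_le hw (min_le_left _ _)
    have hfw : 0 < f w := lt_of_lt_of_le hw (min_le_right _ _)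
    have hzero : gimp (π w) (gimp (f w) 0) = 0 := by
      unfold gimp
      simp [not_le.mpr hfw, not_le.mpr hπw]
    refine le_antisymm ?_ ?_
    · refine le_ciInf fun v => ?_
      show (0:ℝ) ≤ gimp (π v) (gimp (f v) 0)
      rcases hterm v with h | h <;> rw [h] <;> norm_num
    · exact le_of_le_of_eq (ciInf_le hbb w) hzero
end

section
/- In any possibilistic Gödel model with normalized π, theorem T5 holds semantically: Π(f ⇒ g) ≤ N(f) ⇒ Π(g) for all f, g : W → [0,1], where (f ⇒ g)(w) = f(w) ⇒ g(w) is pointwise Gödel implication. -/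
open Set

theorem stmt11 {W : Type*} [Nonempty W] (π : W → ℝ) (hπ : ∀ w, π w ∈ Icc (0:ℝ) 1)
    (hnorm : (⨆ w, π w) = 1)
    (f g : W → ℝ) (hf : ∀ w, f w ∈ Icc (0:ℝ) 1) (hg : ∀ w, g w ∈ Icc (0:ℝ) 1) :
    (⨆ w, min (π w) (gimp (f w) (g w))) ≤
      gimp (⨅ w, gimp (π w) (f w)) (⨆ w, min (π w) (g w)) := by
  set N := ⨅ w, gimp (π w) (f w) with hN
  set P := ⨆ w, min (π w) (g w) with hP
  have hbddP : BddAbove (range fun w => min (π w) (g w)) := by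
    refine ⟨1, ?_⟩
    rintro x ⟨w, rfl⟩
    exact le_trans (min_le_left _ _) (hπ w).2
  have hbddN : BddBelow (range fun w => gimp (π w) (f w)) := by
    refine ⟨0, ?_⟩
    rintro x ⟨w, rfl⟩
    unfold gimp
    dsimp only
    split
    · norm_num
    · exact (hf w).1
  have hPle : ∀ w, min (π w) (g w) ≤ P := fun w => le_ciSup hbddP w
  have hNle : ∀ w, N ≤ gimp (π w) (f w) := fun w => ciInf_le hbddN w
  unfold gimp
  split
  · -- N ≤ P : bound LHS by 1
    refine ciSup_le fun w => ?_
    calc min (π w) (gimp (f w) (g w)) ≤ π w := min_le_left _ _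
      _ ≤ 1 := (hπ w).2
  · rename_i hNP
    push_neg at hNP
    refine ciSup_le fun w => ?_
    by_cases hfg : f w ≤ g w
    · -- gimp (f w) (g w) = 1
      by_cases hpf : π w ≤ f w
      · have : min (π w) (gimp (f w) (g w)) ≤ π w := min_le_left _ _
        have h2 : π w ≤ g w := le_trans hpf hfg
        calc min (π w) (gimp (f w) (g w)) ≤ π w := min_le_left _ _
          _ = min (π w) (g w) := (min_eq_left h2).symm
          _ ≤ P := hPle w
      · -- π w > f w, so gimp (π w) (f w) = f w, N ≤ f w
        exfalso
        push_neg at hpf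
        have h1 : N ≤ f w := by
          have := hNle w
          unfold gimp at this
          rwa [if_neg (not_le.mpr hpf)] at this
        have h2 : f w ≤ min (π w) (g w) := le_min (le_of_lt hpf) hfg
        exact absurd (le_trans h1 (le_trans h2 (hPle w))) (not_le.mpr hNP)
    · -- gimp (f w) (g w) = g w
      rw [if_neg hfg]
      exact hPle w
end

section
/- In any possibilistic Gödel model with normalized π, theorem T4 holds semantically: max(N(f) ⇒ Π(g), N(λw. (f(w) ⇒ g(w)) ⇒ g(w))) = 1 for all f, g : W → [0,1]. -/
open Set

theorem stmt14 {W : Type*} [Nonempty W] (π : W → ℝ) (hπ : ∀ w, π w ∈ Icc (0:ℝ) 1)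
    (hnorm : (⨆ w, π w) = 1)
    (f g : W → ℝ) (hf : ∀ w, f w ∈ Icc (0:ℝ) 1) (hg : ∀ w, g w ∈ Icc (0:ℝ) 1) :
    max (gimp (⨅ w, gimp (π w) (f w)) (⨆ w, min (π w) (g w)))
      (⨅ w, gimp (π w) (gimp (gimp (f w) (g w)) (g w))) = 1 := by
  classical
  set Ng : W → ℝ := fun w => gimp (π w) (gimp (gimp (f w) (g w)) (g w)) with hNg
  have hE01 : ∀ w, Ng w ∈ Icc (0:ℝ) 1 := by
    intro w
    simp only [hNg, gimp]
    split_ifs <;>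
      first
        | exact ⟨zero_le_one, le_refl 1⟩
        | exact ⟨(hg w).1, (hg w).2⟩
  have hbNg : BddBelow (Set.range Ng) := ⟨0, by rintro x ⟨w, rfl⟩; exact (hE01 w).1⟩
  have hbNf : BddBelow (Set.range fun w => gimp (π w) (f w)) := by
    refine ⟨0, ?_⟩
    rintro x ⟨w, rfl⟩
    simp only [gimp]
    split_ifs
    · exact zero_le_one
    · exact (hf w).1
  have hbP : BddAbove (Set.range fun w => min (π w) (g w)) := by
    refine ⟨1, ?_⟩
    rintro x ⟨w, rfl⟩
    exact le_trans (min_le_left _ _) (hπ w).2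
  by_cases h : (⨅ w, gimp (π w) (f w)) ≤ (⨆ w, min (π w) (g w))
  · have h1 : gimp (⨅ w, gimp (π w) (f w)) (⨆ w, min (π w) (g w)) = 1 := if_pos h
    rw [h1, max_eq_left]
    exact le_trans (ciInf_le hbNg (Classical.arbitrary W)) (hE01 _).2
  · push_neg at h
    have key : ∀ w, Ng w = 1 := by
      intro w
      have h1 : (⨅ w, gimp (π w) (f w)) ≤ gimp (π w) (f w) := ciInf_le hbNf w
      have h2 : min (π w) (g w) ≤ (⨆ w, min (π w) (g w)) := le_ciSup hbP w
      have hlt : min (π w) (g w) < gimp (π w) (f w) :=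
        lt_of_le_of_lt h2 (lt_of_lt_of_le h h1)
      have hinner : π w ≤ gimp (gimp (f w) (g w)) (g w) := by
        by_cases hfg : f w ≤ g w
        · have hgi : gimp (f w) (g w) = 1 := if_pos hfg
          rw [hgi]
          by_cases hg1 : (1:ℝ) ≤ g w
          · rw [gimp, if_pos hg1]; exact (hπ w).2
          · rw [gimp, if_neg hg1]
            -- need π w ≤ g w
            by_cases hpf : π w ≤ f w
            · exact le_trans hpf hfg
            · have : gimp (π w) (f w) = f w := if_neg hpf
              rw [this] at hlt
              have hπg : min (π w) (g w) = π w := by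
                rcases min_cases (π w) (g w) with ⟨e, _⟩ | ⟨e, hle⟩
                · exact e
                · exfalso; rw [e] at hlt; exact absurd (le_trans (le_of_lt hlt) hfg) (lt_irrefl _ ∘ lt_of_lt_of_le (lt_of_lt_of_le hlt hfg))
              rw [hπg] at hlt
              exact le_trans (le_of_lt hlt) hfg
        · have hgi : gimp (f w) (g w) = g w := if_neg hfg
          rw [hgi, gimp, if_pos le_rfl]
          exact (hπ w).2
      exact if_pos hinner
    have hconst : Ng = fun _ : W => (1:ℝ) := funext key
    rw [hNg] at hconst
    have : (⨅ w, gimp (π w) (gimp (gimp (f w) (g w)) (g w))) = 1 := by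
      rw [show (fun w => gimp (π w) (gimp (gimp (f w) (g w)) (g w))) = fun _ : W => (1:ℝ) from hconst]
      exact ciInf_const
    rw [this, max_eq_right]
    have hgim : gimp (⨅ w, gimp (π w) (f w)) (⨆ w, min (π w) (g w)) = (⨆ w, min (π w) (g w)) :=
      if_neg (not_le.mpr h)
    rw [hgim]
    exact ciSup_le fun w => le_trans (min_le_left _ _) (hπ w).2
end

section
/- In any possibilistic Gödel model with normalized π, theorem T3 holds semantically: Π(λw. ¬¬f(w)) ≤ ¬¬Π(f) for every f : W → [0,1], where ¬x = x ⇒ 0 with Gödel implication. -/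
open Set

theorem stmt15 {W : Type*} [Nonempty W] (π : W → ℝ) (hπ : ∀ w, π w ∈ Icc (0:ℝ) 1)
    (hnorm : (⨆ w, π w) = 1) (f : W → ℝ) (hf : ∀ w, f w ∈ Icc (0:ℝ) 1) :
    (⨆ w, min (π w) (gimp (gimp (f w) 0) 0)) ≤
      gimp (gimp (⨆ w, min (π w) (f w)) 0) 0 := by
  have hb : ∀ w, min (π w) (gimp (gimp (f w) 0) 0) ≤ 1 :=
    fun w => le_trans (min_le_left _ _) (hπ w).2
  by_cases h : (⨆ w, min (π w) (f w)) ≤ 0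
  · have h1 : gimp (⨆ w, min (π w) (f w)) 0 = 1 := by simp [gimp, h]
    rw [h1]
    have h2 : gimp 1 0 = 0 := by norm_num [gimp]
    rw [h2]
    apply Real.iSup_le _ le_rfl
    intro w
    have hbdd : BddAbove (Set.range fun w => min (π w) (f w)) :=
      ⟨1, by rintro x ⟨w, rfl⟩; exact le_trans (min_le_left _ _) (hπ w).2⟩
    have hw : min (π w) (f w) ≤ 0 := le_trans (le_ciSup hbdd w) h
    rcases le_or_gt (f w) 0 with hf0 | hf0
    · have e1 : gimp (f w) 0 = 1 := by simp [gimp, hf0]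
      rw [e1]
      have e2 : gimp 1 0 = 0 := by norm_num [gimp]
      rw [e2]; exact min_le_right _ _
    · have hπ0 : π w ≤ 0 := by
        rcases min_le_iff.mp hw with h' | h'
        · exact h'
        · linarith
      exact le_trans (min_le_left _ _) hπ0
  · push_neg at h
    have h1 : gimp (⨆ w, min (π w) (f w)) 0 = 0 := by simp [gimp, not_le.mpr h]
    rw [h1]
    have h2 : gimp 0 0 = 1 := by norm_num [gimp]
    rw [h2]
    exact Real.iSup_le hb zero_le_one
end

section
/- In any possibilistic Gödel model with normalized π, theorem T2 holds semantically: ¬¬N(f) ≤ N(λw. ¬¬f(w)) for every f : W → [0,1], where ¬x = x ⇒ 0 with Gödel implication. -/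
open Set

theorem stmt16 {W : Type*} [Nonempty W] (π : W → ℝ) (hπ : ∀ w, π w ∈ Icc (0:ℝ) 1)
    (hnorm : (⨆ w, π w) = 1) (f : W → ℝ) (hf : ∀ w, f w ∈ Icc (0:ℝ) 1) :
    gimp (gimp (⨅ w, gimp (π w) (f w)) 0) 0 ≤
      ⨅ w, gimp (π w) (gimp (gimp (f w) 0) 0) := by
  have hnn : ∀ w, 0 ≤ gimp (π w) (f w) := by
    intro w
    unfold gimp
    split
    · norm_num
    · exact (hf w).1
  have hbdd : BddBelow (Set.range fun w => gimp (π w) (f w)) :=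
    ⟨0, by rintro x ⟨w, rfl⟩; exact hnn w⟩
  set N := ⨅ w, gimp (π w) (f w) with hN
  by_cases h : N ≤ 0
  · have : gimp (gimp N 0) 0 = 0 := by
      unfold gimp; simp [h]
    rw [this]
    apply le_ciInf
    intro w
    unfold gimp
    split_ifs <;> norm_num
  · push_neg at h
    have : gimp (gimp N 0) 0 = 1 := by
      unfold gimp
      rw [if_neg (not_le.mpr h)]
      norm_num
    rw [this]
    apply le_ciInf
    intro w
    have hle : N ≤ gimp (π w) (f w) := ciInf_le hbdd w
    have hpos : 0 < gimp (π w) (f w) := lt_of_lt_of_le h hle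
    unfold gimp at hpos ⊢
    by_cases hc : π w ≤ f w
    · by_cases hf0 : f w ≤ 0
      · have : π w ≤ 0 := hc.trans hf0
        simp only [if_pos hf0]
        norm_num [this]
      · simp only [if_neg hf0]
        norm_num
    · rw [if_neg hc] at hpos
      have hf0 : ¬ f w ≤ 0 := not_le.mpr hpos
      simp only [if_neg hf0]
      norm_num
end
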